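/- arXiv:2004.07079 — 3 statements merged into one kernel-verified Lean document; each statement's English description precedes it below -/
import Mathlib

section
/- The binary reflected Gray codes of n and n+1 differ in exactly one bit position; specifically, if c is the position of the rightmost zero bit in the binary representation of n, then the Gray code bit at position c is the unique bit that changes. -/
/-- The binary reflected Gray code of a natural number. -/
def grayCode (n : ℕ) : ℕ := n ^^^ (n / 2)

private lemma testBit_div_pow (x k i : ℕ) :
    (x / 2 ^ k).testBit i = x.testBit (k + i) := by
  simp [Nat.testBit_eq_decide_div_mod_eq, Nat.div_div_eq_div_mul, ← pow_add]

private lemma succ_bit (n c : ℕ)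
    (hones : ∀ i < c, n.testBit i = true) (hzero : n.testBit c = false) :
    ∀ i : ℕ, (n + 1).testBit i =
      if i < c then false else if i = c then true else n.testBit i := by
  have hmod : n % 2 ^ (c + 1) = 2 ^ c - 1 := by
    apply Nat.eq_of_testBit_eq
    intro i
    simp only [Nat.testBit_mod_two_pow, Nat.testBit_two_pow_sub_one]
    rcases lt_trichotomy i c with h | h | h
    · simp [hones i h, h, Nat.lt_succ_of_lt h]
    · subst h; simp [hzero]
    · simp [Nat.not_lt_of_gt h, (show ¬ i < c + 1 by omega)]
  have hpos : 1 ≤ 2 ^ c := Nat.one_le_two_pow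
  have hn1 : n + 1 = 2 ^ (c + 1) * (n / 2 ^ (c + 1)) + 2 ^ c := by
    have := Nat.div_add_mod n (2 ^ (c + 1))
    omega
  have hmod1 : (n + 1) % 2 ^ (c + 1) = 2 ^ c := by
    rw [hn1, Nat.mul_add_mod]
    exact Nat.mod_eq_of_lt (by have := Nat.pow_lt_pow_succ (a := 2) one_lt_two (n := c); omega)
  have hdiv1 : (n + 1) / 2 ^ (c + 1) = n / 2 ^ (c + 1) := by
    rw [hn1, Nat.mul_add_div (Nat.two_pow_pos _)]
    have : 2 ^ c / 2 ^ (c + 1) = 0 :=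
      Nat.div_eq_of_lt (by have := Nat.pow_lt_pow_succ (a := 2) one_lt_two (n := c); omega)
    omega
  intro i
  rcases le_or_gt i c with hic | hic
  · have h1 : (n + 1).testBit i = ((n + 1) % 2 ^ (c + 1)).testBit i := by
      simp [Nat.testBit_mod_two_pow, (show i < c + 1 by omega)]
    rw [h1, hmod1, Nat.testBit_two_pow]
    rcases eq_or_lt_of_le hic with h | h
    · simp [h]
    · simp [h, (show ¬ c = i by omega), Ne.symm (Nat.ne_of_lt h)]
  · obtain ⟨j, rfl⟩ : ∃ j, i = (c + 1) + j := ⟨i - (c + 1), by omega⟩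
    rw [show ((n + 1).testBit (c + 1 + j)) = ((n + 1) / 2 ^ (c + 1)).testBit j from
      (testBit_div_pow _ _ _).symm, hdiv1, testBit_div_pow]
    simp [(show ¬ c + 1 + j < c by omega), (show ¬ c + 1 + j = c by omega)]

/-- The Gray codes of `n` and `n + 1` differ in exactly one bit position, namely
the position `c` of the rightmost zero bit of `n`. -/
theorem grayCode_succ_differs_in_one_bit (n c : ℕ)
    (hones : ∀ i < c, n.testBit i = true) (hzero : n.testBit c = false) :
    ∀ i : ℕ, (grayCode n).testBit i ≠ (grayCode (n + 1)).testBit i ↔ i = c := by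
  have hs := succ_bit n c hones hzero
  intro i
  simp only [grayCode, Nat.testBit_xor, ← Nat.testBit_div_two]
  rw [Nat.testBit_div_two, Nat.testBit_div_two, hs i, hs (i + 1)]
  rcases lt_trichotomy i c with h | h | h
  · rcases eq_or_lt_of_le (Nat.succ_le_of_lt h) with h1 | h1
    · -- i + 1 = c
      have h2 : n.testBit (i + 1) = false := by rw [show i + 1 = c from h1]; exact hzero
      rw [hones i h, h2]
      simp [h, (show ¬ i + 1 < c by omega), (show i + 1 = c from h1), (show ¬ i = c by omega)]
    · rw [hones i h, hones (i + 1) h1]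
      simp [h, h1, (show ¬ i = c by omega)]
  · subst h
    simp only [hzero, lt_irrefl, if_neg (show ¬ i + 1 < i by omega),
      if_neg (show ¬ i + 1 = i by omega), if_false, if_pos rfl]
    cases hb : n.testBit (i + 1) <;> simp
  · simp [(show ¬ i < c by omega), (show ¬ i = c by omega), (show ¬ i + 1 < c by omega),
      (show ¬ i + 1 = c by omega)]
end

section
/- If an m × m integer matrix C has all row sums and all column sums equal to zero, then all (m−1) × (m−1) cofactors of C are equal. -/
/-!
If the columns of `C` sum to zero, a deleted row is minus the sum of the remaining ones, so the
signed minor `(-1)^i * det` (row `i` deleted) does not depend on `i`; symmetrically, vanishing row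
sums make it independent of the deleted column.
-/

open Matrix

section

variable {R : Type*} [CommRing R]

theorem neg_one_pow_mul_eq_of_eq_negOnePow_sub_smul {a b : ℕ} {x y : R}
    (h : x = Int.negOnePow ((a : ℤ) - b) • y) : (-1 : R) ^ a * x = (-1) ^ b * y := by
  rw [h, Units.smul_def, zsmul_eq_mul, ← mul_assoc, Int.negOnePow_sub, Units.val_mul, Int.cast_mul,
    Int.cast_negOnePow_natCast, Int.cast_negOnePow_natCast, ← mul_assoc, ← pow_add, ← two_mul,
    pow_mul, neg_one_sq, one_pow, one_mul]

theorem neg_one_pow_mul_det_submatrix_succAbove_row {n : ℕ} (M : Matrix (Fin (n + 1)) (Fin n) R)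
    (hM : ∀ j, ∑ i, M i j = 0) (i k : Fin (n + 1)) :
    (-1 : R) ^ (i : ℕ) * (M.submatrix i.succAbove id).det =
      (-1) ^ (k : ℕ) * (M.submatrix k.succAbove id).det :=
  neg_one_pow_mul_eq_of_eq_negOnePow_sub_smul <|
    submatrix_succAbove_det_eq_negOnePow_submatrix_succAbove_det M
      (funext fun j => (Finset.sum_apply j _ _).trans (hM j)) i k

theorem neg_one_pow_mul_det_submatrix_succAbove_col {n : ℕ} (M : Matrix (Fin n) (Fin (n + 1)) R)
    (hM : ∀ i, ∑ j, M i j = 0) (j l : Fin (n + 1)) :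
    (-1 : R) ^ (j : ℕ) * (M.submatrix id j.succAbove).det =
      (-1) ^ (l : ℕ) * (M.submatrix id l.succAbove).det :=
  neg_one_pow_mul_eq_of_eq_negOnePow_sub_smul <|
    submatrix_succAbove_det_eq_negOnePow_submatrix_succAbove_det' M hM j l

end

/-- If all row sums and all column sums of a square matrix `C` over a commutative
ring are zero, then all `(m−1) × (m−1)` cofactors of `C` are equal.  Here the
`(i,j)` cofactor is `(−1)^(i+j)` times the determinant of the matrix obtained by
deleting row `i` and column `j`. -/
theorem cofactors_all_equal {R : Type*} [CommRing R] (n : ℕ)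
    (C : Matrix (Fin (n + 1)) (Fin (n + 1)) R)
    (hrow : ∀ i, ∑ j, C i j = 0) (hcol : ∀ j, ∑ i, C i j = 0) :
    ∀ i j k l : Fin (n + 1),
      (-1 : R) ^ ((i : ℕ) + (j : ℕ)) *
          (C.submatrix i.succAbove j.succAbove).det =
        (-1 : R) ^ ((k : ℕ) + (l : ℕ)) *
          (C.submatrix k.succAbove l.succAbove).det := by
  intro i j k l
  have hrows : (-1 : R) ^ (i : ℕ) * (C.submatrix i.succAbove j.succAbove).det =
      (-1) ^ (k : ℕ) * (C.submatrix k.succAbove j.succAbove).det :=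
    neg_one_pow_mul_det_submatrix_succAbove_row (C.submatrix id j.succAbove)
      (fun b => hcol (j.succAbove b)) i k
  have hcols : (-1 : R) ^ (j : ℕ) * (C.submatrix k.succAbove j.succAbove).det =
      (-1) ^ (l : ℕ) * (C.submatrix k.succAbove l.succAbove).det :=
    neg_one_pow_mul_det_submatrix_succAbove_col (C.submatrix k.succAbove id)
      (fun a => hrow (k.succAbove a)) j l
  calc (-1 : R) ^ ((i : ℕ) + j) * (C.submatrix i.succAbove j.succAbove).det
      = (-1) ^ (j : ℕ) * ((-1) ^ (i : ℕ) * (C.submatrix i.succAbove j.succAbove).det) := by ring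
    _ = (-1) ^ (k : ℕ) * ((-1) ^ (j : ℕ) * (C.submatrix k.succAbove j.succAbove).det) := by
      rw [hrows]; ring
    _ = (-1) ^ ((k : ℕ) + l) * (C.submatrix k.succAbove l.succAbove).det := by
      rw [hcols]; ring
end

section
/- With set-reconciliation degree bounds: if sets S_A and S_B over a field have symmetric difference of size at most m̄ and d = |S_A| − |S_B|, then the reduced rational function χ_{S_A}(Z)/χ_{S_B}(Z) has numerator degree at most ⌊(m̄ + d)/2⌋ and denominator degree at most ⌊(m̄ − d)/2⌋. -/
open Polynomial

/-- Set-reconciliation degree bounds: if the symmetric difference of `S_A` and `S_B`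
has size at most `m̄` and `d = |S_A| − |S_B|`, then the numerator
`χ_{S_A ∖ S_B}` of the reduced rational function `χ_{S_A}/χ_{S_B}` has degree at
most `⌊(m̄ + d)/2⌋` and the denominator `χ_{S_B ∖ S_A}` has degree at most
`⌊(m̄ − d)/2⌋`. -/
theorem set_reconciliation_degree_bounds
    (F : Type*) [Field F] [DecidableEq F]
    (SA SB : Finset F) (mbar : ℕ) (d : ℤ)
    (hd : d = (SA.card : ℤ) - SB.card)
    (hsym : ((SA \ SB) ∪ (SB \ SA)).card ≤ mbar) :
    (∏ s ∈ SA \ SB, (X - C s)).natDegree ≤ (((mbar : ℤ) + d) / 2).toNat ∧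
      (∏ s ∈ SB \ SA, (X - C s)).natDegree ≤ (((mbar : ℤ) - d) / 2).toNat := by
  have hdeg1 : (∏ s ∈ SA \ SB, (X - C s)).natDegree = (SA \ SB).card := by
    rw [natDegree_prod _ _ (fun s _ => X_sub_C_ne_zero s)]
    simp [natDegree_X_sub_C]
  have hdeg2 : (∏ s ∈ SB \ SA, (X - C s)).natDegree = (SB \ SA).card := by
    rw [natDegree_prod _ _ (fun s _ => X_sub_C_ne_zero s)]
    simp [natDegree_X_sub_C]
  have hdisj : Disjoint (SA \ SB) (SB \ SA) := disjoint_sdiff_sdiff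
  have hcard : (SA \ SB).card + (SB \ SA).card ≤ mbar := by
    rw [← Finset.card_union_of_disjoint hdisj]; exact hsym
  have h1 : SA.card = (SA ∩ SB).card + (SA \ SB).card := by
    rw [Finset.card_inter_add_card_sdiff]
  have h2 : SB.card = (SA ∩ SB).card + (SB \ SA).card := by
    rw [Finset.inter_comm, Finset.card_inter_add_card_sdiff]
  rw [hdeg1, hdeg2]
  omega
end
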